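/- Let e : [0,∞) → ℝ^m be absolutely continuous and ψ : [0,∞) → ℝ continuously differentiable with inf ψ > 0. Suppose on an interval [t_i, t_i + τ] the differential inequality d/dt (‖e(t)‖/ψ(t)) ≤ κ₁ holds whenever ‖e(t)‖/ψ(t) ≤ 1, and suppose ‖e(t_i)‖/ψ(t_i) ≤ 1 - τκ₁. Then ‖e(t)‖ ≤ ψ(t) for all t ∈ [t_i, t_i + τ]. -/

import Mathlib

open Set

lemma image_le_add_mul_sub_of_hasDerivWithinAt_le {f f' : ℝ → ℝ} {a b κ : ℝ} (hab : a ≤ b)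
    (hf : ∀ x ∈ Icc a b, HasDerivWithinAt f (f' x) (Icc a b) x)
    (hbound : ∀ x ∈ Ico a b, f' x ≤ κ) :
    f b ≤ f a + κ * (b - a) := by
  have hB : ∀ x, HasDerivAt (fun x => f a + κ * (x - a)) κ x := fun x => by
    simpa using ((hasDerivAt_id x).sub_const a).const_mul κ |>.const_add (f a)
  refine image_le_of_deriv_right_le_deriv_boundary (B := fun x => f a + κ * (x - a))
    (fun x hx => (hf x hx).continuousWithinAt) (fun x hx => ?_) (by simp)
    (fun x _ => (hB x).continuousAt.continuousWithinAt) (fun x _ => (hB x).hasDerivWithinAt)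
    hbound (right_mem_Icc.2 hab)
  exact (hf x (Ico_subset_Icc_self hx)).mono_of_mem_nhdsWithin (Icc_mem_nhdsGE_of_mem hx)

theorem image_le_of_hasDerivWithinAt_le_of_le_sub_mul {f f' : ℝ → ℝ} {a b c κ : ℝ}
    (hκ : 0 < κ) (hf : ∀ x ∈ Icc a b, HasDerivWithinAt f (f' x) (Icc a b) x)
    (hbound : ∀ x ∈ Icc a b, f x ≤ c → f' x ≤ κ) (ha : f a ≤ c - (b - a) * κ) :
    ∀ x ∈ Icc a b, f x ≤ c := by
  intro t ht
  by_contra! hct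
  -- `T` is the first time in `[a, t]` at which `f` reaches the level `c`.
  set S := Icc a t ∩ f ⁻¹' Ici c
  have hSt : Icc a t ⊆ Icc a b := Icc_subset_Icc_right ht.2
  have hS_closed : IsClosed S := ContinuousOn.preimage_isClosed_of_isClosed
    (fun x hx => (hf x (hSt hx)).continuousWithinAt.mono hSt) isClosed_Icc isClosed_Ici
  have hS_bdd : BddBelow S := ⟨a, fun x hx => hx.1.1⟩
  set T := sInf S
  have hTS : T ∈ S := hS_closed.csInf_mem ⟨t, right_mem_Icc.2 ht.1, hct.le⟩ hS_bdd
  have hTb : Icc a T ⊆ Icc a b := Icc_subset_Icc_right (hTS.1.2.trans ht.2)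
  have hbelow : ∀ x ∈ Ico a T, f x ≤ c := fun x hx => by
    by_contra! hcx
    exact (csInf_le hS_bdd ⟨⟨hx.1, hx.2.le.trans hTS.1.2⟩, hcx.le⟩).not_gt hx.2
  have hfT : f T ≤ f a + κ * (T - a) :=
    image_le_add_mul_sub_of_hasDerivWithinAt_le hTS.1.1
      (fun x hx => (hf x (hTb hx)).mono hTb)
      (fun x hx => hbound x (hTb (Ico_subset_Icc_self hx)) (hbelow x hx))
  -- `c ≤ f T ≤ c - κ (b - T)` forces `T = b`, hence `T = t`.
  have hcT : c ≤ f T := hTS.2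
  have hbT : b ≤ T := by
    by_contra! hTlt
    nlinarith [mul_pos hκ (sub_pos.2 hTlt)]
  have hTt : T = t := le_antisymm hTS.1.2 (ht.2.trans hbT)
  rw [hTt] at hfT
  nlinarith [mul_nonneg hκ.le (sub_nonneg.2 ht.2)]

theorem stmt_3_general {m : ℕ} (e : ℝ → EuclideanSpace ℝ (Fin m)) (ψ : ℝ → ℝ)
    (ti τ κ₁ : ℝ) (hκ₁ : 0 < κ₁)
    (hψpos : ∀ t, 0 < ψ t)
    (z' : ℝ → ℝ)
    (hz : ∀ t ∈ Set.Icc ti (ti + τ),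
      HasDerivWithinAt (fun s => ‖e s‖ / ψ s) (z' t) (Set.Icc ti (ti + τ)) t)
    (hineq : ∀ t ∈ Set.Icc ti (ti + τ), ‖e t‖ / ψ t ≤ 1 → z' t ≤ κ₁)
    (h0 : ‖e ti‖ / ψ ti ≤ 1 - τ * κ₁) :
    ∀ t ∈ Set.Icc ti (ti + τ), ‖e t‖ ≤ ψ t := fun t ht =>
  (div_le_one (hψpos t)).1 <| image_le_of_hasDerivWithinAt_le_of_le_sub_mul hκ₁ hz hineq
    (by rwa [add_sub_cancel_left]) t ht

theorem stmt_3 {m : ℕ} (e : ℝ → EuclideanSpace ℝ (Fin m)) (ψ : ℝ → ℝ)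
    (ti τ κ₁ : ℝ) (hτ : 0 < τ) (hκ₁ : 0 < κ₁)
    (hψpos : ∀ t, 0 < ψ t)
    (z' : ℝ → ℝ)
    (hz : ∀ t ∈ Set.Icc ti (ti + τ),
      HasDerivWithinAt (fun s => ‖e s‖ / ψ s) (z' t) (Set.Icc ti (ti + τ)) t)
    (hineq : ∀ t ∈ Set.Icc ti (ti + τ), ‖e t‖ / ψ t ≤ 1 → z' t ≤ κ₁)
    (h0 : ‖e ti‖ / ψ ti ≤ 1 - τ * κ₁) :
    ∀ t ∈ Set.Icc ti (ti + τ), ‖e t‖ ≤ ψ t :=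
  stmt_3_general e ψ ti τ κ₁ hκ₁ hψpos z' hz hineq h0
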